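/- If r is an integer with q^n · P^{-2} · log q < r ≤ s_n, then the number of elements b ∈ F_q for which S_{f_b}(r) is empty is at most q/log q. -/

import Mathlib

/-- The box `X^{n+1}(r) = {0,…,s₁−1} × ⋯ × {0,…,s_n−1} × {0,…,r−1}` of exponent tuples,
where `sᵢ` is the multiplicative order of `g i` and the last coordinate is truncated
at `r`. -/
noncomputable def expBox {F : Type*} [Monoid F] {n : ℕ} (g : Fin (n + 1) → Fˣ) (r : ℕ) :
    Finset (Fin (n + 1) → ℕ) :=
  Fintype.piFinset fun i => Finset.range (if i = Fin.last n then r else orderOf (g i))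

/-- The exponential polynomial `f_b(x) = a₁g₁^{x₁} + ⋯ + a_{n+1}g_{n+1}^{x_{n+1}} − b`. -/
noncomputable def expPoly {F : Type*} [Field F] {n : ℕ} (a g : Fin (n + 1) → Fˣ) (b : F)
    (x : Fin (n + 1) → ℕ) : F :=
  (∑ i, (a i : F) * (g i : F) ^ x i) - b

/-- `S_{f_b}(r)`: the set of zeros of `f_b` in the box `X^{n+1}(r)`. -/
noncomputable def solSet {F : Type*} [Field F] [DecidableEq F] {n : ℕ} (a g : Fin (n + 1) → Fˣ)
    (b : F) (r : ℕ) : Finset (Fin (n + 1) → ℕ) :=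
  (expBox g r).filter fun x => expPoly a g b x = 0

/-- `N_{f_b}(r) = #S_{f_b}(r)`. -/
noncomputable def solCount {F : Type*} [Field F] [DecidableEq F] {n : ℕ} (a g : Fin (n + 1) → Fˣ)
    (b : F) (r : ℕ) : ℕ :=
  (solSet a g b r).card

/-- `P = ∏_{l=1}^{n} s_l`, the product of the multiplicative orders of all the `g i`
except the last one. -/
noncomputable def ordProd {F : Type*} [Monoid F] {n : ℕ} (g : Fin (n + 1) → Fˣ) : ℕ :=
  ∏ i : Fin n, orderOf (g i.castSucc)

/-!
Fix a primitive additive character `ψ` of `F` and put `f(x) = ∑ aᵢ gᵢ^{xᵢ}`, so that `N_b`, the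
number of `x` in the box with `f(x) = b`, is the number of zeros of `f_b`. Parseval gives
`∑_c |∑_x ψ(c f(x))|² = q ∑_b N_b²`. The term `c = 0` is `(P r)²`. For `c ≠ 0` the inner sum
factors over the coordinates: each complete sum `∑_{y < sᵢ} ψ(c aᵢ gᵢ^y)` has square modulus at
most `q`, and the incomplete last factor has mean square `r` over `c`. Hence
`q ∑ N_b² ≤ (P r)² + q^{n+1} r`, and Cauchy–Schwarz on the support of `N` bounds the number of
`b` with `N_b = 0` by `q^{n+2} / (P² r)`, which the hypothesis on `r` makes at most `q / log q`.
-/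

open Finset

lemma Function.Periodic.sum_range_add {M : Type*} [AddCancelCommMonoid M] {f : ℕ → M} {n : ℕ}
    (hf : Function.Periodic f n) (j : ℕ) :
    ∑ x ∈ range n, f (j + x) = ∑ x ∈ range n, f x := by
  induction j with
  | zero => simp
  | succ j ih =>
    have h := (sum_range_succ (fun x => f (j + x)) n).symm.trans (sum_range_succ' _ n)
    rw [hf j, add_zero] at h
    simpa only [add_assoc, add_comm 1, ih] using (add_right_cancel h).symm

lemma AddChar.map_sum_eq_prod {A M ι : Type*} [AddCommMonoid A] [CommMonoid M]
    (ψ : AddChar A M) (s : Finset ι) (f : ι → A) :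
    ψ (∑ i ∈ s, f i) = ∏ i ∈ s, ψ (f i) := by
  classical
  induction s using Finset.induction_on with
  | empty => simp
  | insert i s hi ih => rw [sum_insert hi, prod_insert hi, map_add_eq_mul, ih]

lemma Units.injOn_mul_pow {R : Type*} [Monoid R] (u v : Rˣ) :
    Set.InjOn (fun x : ℕ => (u : R) * (v : R) ^ x) (Set.Iio (orderOf v)) := by
  intro x hx y hy h
  simp only [Units.mul_right_inj, ← Units.val_pow_eq_pow_val, Units.val_inj] at h
  exact pow_injOn_Iio_orderOf hx hy h

namespace AddChar

variable {R : Type*} [CommRing R] [Fintype R] [DecidableEq R] {ψ : AddChar R ℂ}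

theorem sum_norm_sq_sum_mul_apply_mul (hψ : ψ.IsPrimitive) (h : R → ℂ) :
    ∑ c, ‖∑ b, h b * ψ (c * b)‖ ^ 2 = Fintype.card R * ∑ b, ‖h b‖ ^ 2 := by
  apply Complex.ofReal_injective
  push_cast
  simp_rw [← Complex.mul_conj', map_sum, map_mul, ← map_neg_eq_conj, sum_mul_sum, mul_sum]
  calc ∑ c, ∑ b, ∑ b', h b * ψ (c * b) * ((starRingEnd ℂ) (h b') * ψ (-(c * b')))
      = ∑ b, ∑ b', h b * (starRingEnd ℂ) (h b') * ∑ c, ψ (c * (b - b')) := by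
        rw [sum_comm]
        refine sum_congr rfl fun b _ => ?_
        rw [sum_comm]
        refine sum_congr rfl fun b' _ => ?_
        rw [mul_sum]
        refine sum_congr rfl fun c _ => ?_
        rw [mul_sub, sub_eq_add_neg, map_add_eq_mul]
        ring
    _ = ∑ b, Fintype.card R * (h b * (starRingEnd ℂ) (h b)) := by
        simp_rw [sum_mulShift _ hψ, sub_eq_zero, Nat.cast_ite, Nat.cast_zero, mul_ite, mul_zero,
          sum_ite_eq, mem_univ, if_true, mul_comm]

theorem sum_norm_sq_sum_apply_mul_fiberwise (hψ : ψ.IsPrimitive) {ι : Type*} (s : Finset ι)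
    (f : ι → R) :
    ∑ c, ‖∑ x ∈ s, ψ (c * f x)‖ ^ 2 = Fintype.card R * ∑ b, (#{x ∈ s | f x = b} : ℝ) ^ 2 := by
  have hfiber (c : R) :
      ∑ x ∈ s, ψ (c * f x) = ∑ b, (#{x ∈ s | f x = b} : ℂ) * ψ (c * b) := by
    rw [← sum_fiberwise' s f (fun b => ψ (c * b))]
    simp only [sum_const, nsmul_eq_mul]
  simp_rw [hfiber, sum_norm_sq_sum_mul_apply_mul hψ, Complex.norm_natCast]

theorem sum_norm_sq_sum_apply_mul_of_injOn (hψ : ψ.IsPrimitive) {ι : Type*} (s : Finset ι)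
    {f : ι → R} (hf : Set.InjOn f s) :
    ∑ c, ‖∑ x ∈ s, ψ (c * f x)‖ ^ 2 = Fintype.card R * #s := by
  rw [sum_norm_sq_sum_apply_mul_fiberwise hψ,
    card_eq_sum_card_fiberwise fun x _ => mem_univ (f x)]
  push_cast
  congr 1
  refine sum_congr rfl fun b _ => ?_
  have hfiber : #{x ∈ s | f x = b} ≤ 1 := card_le_one.2 fun x hx y hy => by
    simp only [mem_filter] at hx hy
    exact hf hx.1 hy.1 (hx.2.trans hy.2.symm)
  rcases Nat.le_one_iff_eq_zero_or_eq_one.1 hfiber with h | h <;> simp [h]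

theorem sum_norm_sq_sum_range_apply_mul_mul_pow (hψ : ψ.IsPrimitive) (u v : Rˣ) {m : ℕ}
    (hm : m ≤ orderOf v) :
    ∑ c, ‖∑ x ∈ range m, ψ (c * u * v ^ x)‖ ^ 2 = Fintype.card R * m := by
  simp_rw [mul_assoc _ (u : R)]
  rw [sum_norm_sq_sum_apply_mul_of_injOn hψ _ ((u.injOn_mul_pow v).mono _), card_range]
  simpa using Set.Iio_subset_Iio hm

/-- Averaging over the orbit of `u` under multiplication by `v`: the complete sum is constant on
the orbit, which has `orderOf v` elements. -/
theorem norm_sq_sum_range_orderOf_le (hψ : ψ.IsPrimitive) (u v : Rˣ) :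
    ‖∑ x ∈ range (orderOf v), ψ (u * v ^ x)‖ ^ 2 ≤ Fintype.card R := by
  set s := orderOf v
  set G : R → ℂ := fun d => ∑ x ∈ range s, ψ (d * v ^ x)
  have hv : (v : R) ^ s = 1 := by rw [← Units.val_pow_eq_pow_val, pow_orderOf_eq_one, Units.val_one]
  have hG (j : ℕ) : G (u * v ^ j) = G u := by
    have hper : Function.Periodic (fun x => ψ (u * v ^ x)) s := fun x => by
      simp only [pow_add, hv, mul_one]
    simpa only [G, mul_assoc, ← pow_add] using hper.sum_range_add j
  have hs : (0 : ℝ) < s := by exact_mod_cast orderOf_pos v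
  refine le_of_mul_le_mul_left ?_ hs
  calc (s : ℝ) * ‖G u‖ ^ 2 = ∑ j ∈ range s, ‖G (u * v ^ j)‖ ^ 2 := by simp [hG]
    _ = ∑ d ∈ (range s).image fun j => (u : R) * v ^ j, ‖G d‖ ^ 2 :=
        (sum_image (f := fun d => ‖G d‖ ^ 2) ((u.injOn_mul_pow v).mono (coe_range s).subset)).symm
    _ ≤ ∑ d, ‖G d‖ ^ 2 := sum_le_univ_sum_of_nonneg fun d => by positivity
    _ = s * Fintype.card R := by
        simpa [G, mul_comm] using sum_norm_sq_sum_range_apply_mul_mul_pow hψ 1 v le_rfl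

end AddChar

lemma card_expBox {F : Type*} [Monoid F] {n : ℕ} (g : Fin (n + 1) → Fˣ) (r : ℕ) :
    #(expBox g r) = ordProd g * r := by
  simp [expBox, Fintype.card_piFinset, Fin.prod_univ_castSucc, Fin.castSucc_ne_last, ordProd]

section ExpBox

variable {F : Type*} [Field F] {n : ℕ} (a g : Fin (n + 1) → Fˣ) (r : ℕ)

lemma sum_expBox_addChar_eq_prod (ψ : AddChar F ℂ) (c : F) :
    ∑ x ∈ expBox g r, ψ (c * ∑ i, (a i : F) * (g i : F) ^ x i) =
      (∏ i : Fin n, ∑ y ∈ range (orderOf (g i.castSucc)),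
          ψ (c * a i.castSucc * g i.castSucc ^ y)) *
        ∑ y ∈ range r, ψ (c * a (Fin.last n) * g (Fin.last n) ^ y) := by
  calc _ = ∑ x ∈ expBox g r, ∏ i, ψ (c * a i * g i ^ x i) :=
        sum_congr rfl fun x _ => by simp only [mul_sum, ψ.map_sum_eq_prod, mul_assoc]
    _ = _ := by
        rw [expBox, ← prod_univ_sum _ fun i y => ψ (c * a i * g i ^ y), Fin.prod_univ_castSucc]
        simp [Fin.castSucc_ne_last]

variable [DecidableEq F]

lemma solSet_eq_filter (b : F) :
    solSet a g b r = {x ∈ expBox g r | ∑ i, (a i : F) * (g i : F) ^ x i = b} := by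
  simp only [solSet, expPoly, sub_eq_zero]

variable [Fintype F]

lemma sum_solCount : ∑ b, solCount a g b r = ordProd g * r := by
  simp only [solCount, solSet_eq_filter]
  rw [← card_eq_sum_card_fiberwise fun x _ => mem_univ _, card_expBox]

theorem card_mul_sum_solCount_sq_le (hrs : r ≤ orderOf (g (Fin.last n))) :
    Fintype.card F * ∑ b, (solCount a g b r : ℝ) ^ 2 ≤
      ((ordProd g : ℝ) * r) ^ 2 + Fintype.card F ^ (n + 1) * r := by
  set ψ := AddChar.FiniteField.primitiveChar_to_Complex F
  have hψ : ψ.IsPrimitive := AddChar.FiniteField.primitiveChar_to_Complex_isPrimitive F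
  set q := Fintype.card F
  set W : F → ℂ := fun c => ∑ x ∈ expBox g r, ψ (c * ∑ i, (a i : F) * (g i : F) ^ x i)
  set T : F → ℂ := fun c => ∑ y ∈ range r, ψ (c * a (Fin.last n) * g (Fin.last n) ^ y)
  have hW : ∑ c, ‖W c‖ ^ 2 = q * ∑ b, (solCount a g b r : ℝ) ^ 2 := by
    simp only [W, solCount, solSet_eq_filter]
    exact AddChar.sum_norm_sq_sum_apply_mul_fiberwise hψ _ _
  have hW0 : ‖W 0‖ ^ 2 = ((ordProd g : ℝ) * r) ^ 2 := by
    simp [W, card_expBox]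
  have hWT (c : F) (hc : c ≠ 0) : ‖W c‖ ^ 2 ≤ q ^ n * ‖T c‖ ^ 2 := by
    simp only [W, T, sum_expBox_addChar_eq_prod, norm_mul, mul_pow, norm_prod, ← prod_pow]
    gcongr
    calc _ ≤ ∏ _i : Fin n, (q : ℝ) := prod_le_prod (fun i _ => by positivity) fun i _ => by
          simpa using AddChar.norm_sq_sum_range_orderOf_le hψ (.mk0 c hc * a i.castSucc) _
      _ = q ^ n := by simp
  have hT : ∑ c, ‖T c‖ ^ 2 = q * r :=
    AddChar.sum_norm_sq_sum_range_apply_mul_mul_pow hψ _ _ hrs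
  rw [← hW, ← add_sum_erase _ _ (mem_univ 0), hW0]
  gcongr
  calc ∑ c ∈ univ.erase 0, ‖W c‖ ^ 2 ≤ ∑ c ∈ univ.erase 0, q ^ n * ‖T c‖ ^ 2 :=
        sum_le_sum fun c hc => hWT c (ne_of_mem_erase hc)
    _ ≤ ∑ c, q ^ n * ‖T c‖ ^ 2 := sum_le_univ_sum_of_nonneg fun c => by positivity
    _ = q ^ (n + 1) * r := by rw [← mul_sum, hT]; ring

end ExpBox

theorem card_filter_eq_zero_mul_sq_sum_le {α : Type*} [Fintype α] (N : α → ℕ) {C : ℝ}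
    (h : Fintype.card α * ∑ b, (N b : ℝ) ^ 2 ≤ (∑ b, (N b : ℝ)) ^ 2 + C) :
    #{b | N b = 0} * (∑ b, (N b : ℝ)) ^ 2 ≤ Fintype.card α * C := by
  set S := ∑ b, (N b : ℝ)
  set M := ∑ b, (N b : ℝ) ^ 2
  set K := #{b | N b ≠ 0}
  have hsplit : (#{b | N b = 0} : ℝ) + K = Fintype.card α := by
    exact_mod_cast card_filter_add_card_filter_not _
  have hC : 0 ≤ C := by
    have := sq_sum_le_card_mul_sum_sq (s := univ) (f := fun b => (N b : ℝ))
    rw [card_univ] at this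
    linarith
  have hCS : S ^ 2 ≤ K * M := by
    have hS : ∑ b with N b ≠ 0, (N b : ℝ) = S :=
      sum_filter_of_ne fun b _ hb => by exact_mod_cast hb
    rw [← hS]
    refine sq_sum_le_card_mul_sum_sq.trans (mul_le_mul_of_nonneg_left ?_ K.cast_nonneg)
    exact sum_le_univ_sum_of_nonneg fun b => by positivity
  nlinarith [mul_le_mul_of_nonneg_left h K.cast_nonneg,
    mul_le_mul_of_nonneg_left hCS (Fintype.card α).cast_nonneg,
    mul_nonneg hC (#{b | N b = 0}).cast_nonneg]

theorem statement1_general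
    (F : Type*) [Field F] [Fintype F] [DecidableEq F]
    (n : ℕ)
    (a g : Fin (n + 1) → Fˣ)
    (r : ℕ)
    (hr : (Fintype.card F : ℝ) ^ (n + 1) / (ordProd g : ℝ) ^ 2 *
        Real.log (Fintype.card F) < (r : ℝ))
    (hrs : r ≤ orderOf (g (Fin.last n))) :
    (({b : F | solSet a g b r = ∅}.ncard : ℝ)) ≤
      (Fintype.card F : ℝ) / Real.log (Fintype.card F) := by
  set q := Fintype.card F
  have hlog : 0 < Real.log q := Real.log_pos (by exact_mod_cast Fintype.one_lt_card)
  have hP : (0 : ℝ) < ordProd g := by exact_mod_cast prod_pos fun i _ => orderOf_pos _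
  have hr0 : (0 : ℝ) < r := lt_trans (by positivity) hr
  have hS : ∑ b, (solCount a g b r : ℝ) = ordProd g * r := by exact_mod_cast sum_solCount a g r
  have hE := card_filter_eq_zero_mul_sq_sum_le (fun b => solCount a g b r)
    (hS ▸ card_mul_sum_solCount_sq_le a g r hrs)
  rw [hS] at hE
  have hncard : {b : F | solSet a g b r = ∅}.ncard = #{b | solCount a g b r = 0} := by
    rw [← Set.ncard_coe_finset]
    simp [solCount]
  rw [hncard, le_div_iff₀ hlog]
  rw [div_mul_eq_mul_div, div_lt_iff₀ (by positivity)] at hr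
  refine le_of_mul_le_mul_right ?_ (by positivity : (0 : ℝ) < q ^ (n + 1) * r)
  set E : ℝ := ((#{b | solCount a g b r = 0} : ℕ) : ℝ)
  calc E * Real.log q * (q ^ (n + 1) * r) = E * r * (q ^ (n + 1) * Real.log q) := by ring
    _ ≤ E * r * (r * ordProd g ^ 2) := by gcongr
    _ = E * (ordProd g * r) ^ 2 := by ring
    _ ≤ q * (q ^ (n + 1) * r) := hE

/-- If `r` is an integer with `q^{n+1} · P⁻² · log q < r ≤ s_{n+1}`, then the number of
elements `b ∈ F` for which `S_{f_b}(r)` is empty is at most `q / log q`. -/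
theorem statement1 (p ν : ℕ) (hp : p.Prime) (hν : 1 ≤ ν)
    (F : Type*) [Field F] [Fintype F] [DecidableEq F]
    (hq : Fintype.card F = p ^ ν)
    (n : ℕ) (hn : 1 ≤ n)
    (a g : Fin (n + 1) → Fˣ)
    (r : ℕ)
    (hr : (Fintype.card F : ℝ) ^ (n + 1) / (ordProd g : ℝ) ^ 2 *
        Real.log (Fintype.card F) < (r : ℝ))
    (hrs : r ≤ orderOf (g (Fin.last n))) :
    (({b : F | solSet a g b r = ∅}.ncard : ℝ)) ≤
      (Fintype.card F : ℝ) / Real.log (Fintype.card F) :=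
  statement1_general F n a g r hr hrs
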